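/- arXiv:1804.10370 — 2 statements merged into one kernel-verified Lean document; each statement's English description precedes it below -/
import Mathlib

section
/- Multiplicativity for Motzkin weights: for Motzkin paths M1, M2 and any integer l ≥ 1, w_l(M1 ∘ M2) = w_l(M1) · w_{l+2|M1|}(M2), where for a Motzkin path M of length n, w_l(M) denotes the number of (n,l)-AS-trapezoids A whose associated Motzkin path M(S(A)) equals M, and M1 ∘ M2 denotes concatenation of step sequences. -/
open Finset

/-- `S` is a centred Catalan set of size `n`: an `n`-subset of `{-n+1,…,n-1}` with
`|S ∩ {-i,…,i}| ≥ i+1` for all `0 ≤ i ≤ n-1`. -/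
def IsCCS (n : ℕ) (S : Finset ℤ) : Prop :=
  S.card = n ∧ (∀ x ∈ S, -(n : ℤ) + 1 ≤ x ∧ x ≤ (n : ℤ) - 1) ∧
  ∀ i : ℕ, i ≤ n - 1 → (i : ℤ) + 1 ≤ ((S ∩ Finset.Icc (-(i : ℤ)) (i : ℤ)).card : ℤ)

/-- The dilation operator `s_l`. -/
def dil (l : ℤ) (x : ℤ) : ℤ := if 0 < x then x + l else if x = 0 then 0 else x - l

/-- Concatenation `S1 ∘ S2 = S1 ∪ s_{|S1|-1}(S2)` of centred Catalan sets. -/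
def ccsConcat (S1 S2 : Finset ℤ) : Finset ℤ := S1 ∪ S2.image (dil ((S1.card : ℤ) - 1))

/-- A Dyck path: steps `±1`, nonnegative partial sums, total sum `0`. -/
def IsDyck (L : List ℤ) : Prop :=
  (∀ x ∈ L, x = 1 ∨ x = -1) ∧ (∀ k, 0 ≤ (L.take k).sum) ∧ L.sum = 0

/-- The `p`-th integer in the reading order `0, -1, 1, -2, 2, …, -n+1, n-1, n`. -/
def readOrder (n : ℕ) (p : ℕ) : ℤ :=
  if p = 2 * n - 1 then (n : ℤ)
  else if p % 2 = 1 then -(((p + 1) / 2 : ℕ) : ℤ) else ((p / 2 : ℕ) : ℤ)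

/-- The Dyck path `D(S)` associated with a centred Catalan set `S` of size `n`. -/
def toDyck (n : ℕ) (S : Finset ℤ) : List ℤ :=
  (List.range (2 * n)).map fun p => if readOrder n p ∈ S then (1 : ℤ) else -1

/-- A Motzkin path: steps in `{-1,0,1}`, nonnegative partial sums, total sum `0`. -/
def IsMotzkin (L : List ℤ) : Prop :=
  (∀ x ∈ L, x = -1 ∨ x = 0 ∨ x = 1) ∧ (∀ k, 0 ≤ (L.take k).sum) ∧ L.sum = 0

/-- The Motzkin path `M(S)` of a centred Catalan set `S` of size `n`:
its `i`-th step is `|{-i,i} ∩ S| - 1`. -/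
def motz (n : ℕ) (S : Finset ℤ) : List ℤ :=
  (List.range (n - 1)).map fun k =>
    ((S ∩ ({-((k : ℤ) + 1), (k : ℤ) + 1} : Finset ℤ)).card : ℤ) - 1

/-- The area enclosed between a Motzkin path and the x-axis
(sum of the trapezoid areas `(h_{j-1}+h_j)/2`, which for a path returning to the
x-axis equals the sum of the heights `h_0, …, h_{len-1}`). -/
def marea (L : List ℤ) : ℤ := ∑ j ∈ Finset.range L.length, (L.take j).sum

/-- In every row, consecutive nonzero entries alternate in sign. -/
def RowAlt (A : ℤ → ℤ → ℤ) : Prop :=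
  ∀ i j1 j2, j1 < j2 → A i j1 ≠ 0 → A i j2 ≠ 0 →
    (∀ j, j1 < j → j < j2 → A i j = 0) → A i j1 = -A i j2

/-- In every column, consecutive nonzero entries alternate in sign. -/
def ColAlt (A : ℤ → ℤ → ℤ) : Prop :=
  ∀ j i1 i2, i1 < i2 → A i1 j ≠ 0 → A i2 j ≠ 0 →
    (∀ i, i1 < i → i < i2 → A i j = 0) → A i1 j = -A i2 j

/-- In every column, the first nonzero entry from the top (rows are numbered from
the bottom, so the entry with the largest row index) is `1`. -/
def ColTopPos (A : ℤ → ℤ → ℤ) : Prop :=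
  ∀ i j, A i j ≠ 0 → (∀ i', i < i' → A i' j = 0) → A i j = 1

/-- An alternating sign triangle of order `n`, encoded as `A : ℤ → ℤ → ℤ` where
`A i j` is the entry in row `i` (from the bottom, `1 ≤ i ≤ n`) and column `j`
(`-i+1 ≤ j ≤ i-1`), with value `0` outside this range. -/
def IsAST (n : ℕ) (A : ℤ → ℤ → ℤ) : Prop :=
  (∀ i j, A i j ≠ 0 → 1 ≤ i ∧ i ≤ (n : ℤ) ∧ -i + 1 ≤ j ∧ j ≤ i - 1) ∧
  (∀ i j, A i j = -1 ∨ A i j = 0 ∨ A i j = 1) ∧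
  (∀ i : ℤ, 1 ≤ i → i ≤ (n : ℤ) → ∑ j ∈ Finset.Icc (-i + 1) (i - 1), A i j = 1) ∧
  RowAlt A ∧ ColAlt A ∧ ColTopPos A

/-- The set of column labels of an AST of order `n` with positive column-sum. -/
noncomputable def astCols (n : ℕ) (A : ℤ → ℤ → ℤ) : Finset ℤ :=
  (Finset.Icc (-(n : ℤ) + 1) ((n : ℤ) - 1)).filter fun j =>
    0 < ∑ i ∈ Finset.Icc (1 : ℤ) (n : ℤ), A i j

/-- An `(n,l)`-alternating sign trapezoid, encoded as `A : ℤ → ℤ → ℤ` where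
`A i j` is the entry in row `i` (from the bottom, `1 ≤ i ≤ n`) and column `j`
(`-i+1 ≤ j ≤ l+i-1`), with value `0` outside this range. -/
def IsASTrap (n l : ℕ) (A : ℤ → ℤ → ℤ) : Prop :=
  (∀ i j, A i j ≠ 0 → 1 ≤ i ∧ i ≤ (n : ℤ) ∧ -i + 1 ≤ j ∧ j ≤ (l : ℤ) + i - 1) ∧
  (∀ i j, A i j = -1 ∨ A i j = 0 ∨ A i j = 1) ∧
  (∀ i : ℤ, 1 ≤ i → i ≤ (n : ℤ) →
    ∑ j ∈ Finset.Icc (-i + 1) ((l : ℤ) + i - 1), A i j = 1) ∧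
  (∀ j : ℤ, 1 ≤ j → j ≤ (l : ℤ) - 1 → ∑ i ∈ Finset.Icc (1 : ℤ) (n : ℤ), A i j = 0) ∧
  RowAlt A ∧ ColAlt A ∧ ColTopPos A

/-- The centred Catalan set `S(A)` associated with an `(n,l)`-AS-trapezoid `A`:
take the columns with positive column-sum, subtract `1` from nonpositive labels,
subtract `l-1` from positive labels, and adjoin `0`. -/
noncomputable def trapCat (n l : ℕ) (A : ℤ → ℤ → ℤ) : Finset ℤ :=
  insert 0
    (((Finset.Icc (-(n : ℤ) + 1) ((l : ℤ) + n - 1)).filter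
        (fun j => 0 < ∑ i ∈ Finset.Icc (1 : ℤ) (n : ℤ), A i j)).image
      fun j => if j ≤ 0 then j - 1 else j - ((l : ℤ) - 1))

/-- `wS n l S`: the number of `(n,l)`-AS-trapezoids with associated centred
Catalan set `S`. -/
noncomputable def wS (n l : ℕ) (S : Finset ℤ) : ℕ :=
  Nat.card {A : ℤ → ℤ → ℤ // IsASTrap n l A ∧ trapCat n l A = S}

/-- `wM n l M`: the number of `(n,l)`-AS-trapezoids whose associated Motzkin path
is `M`. -/
noncomputable def wM (n l : ℕ) (M : List ℤ) : ℕ :=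
  Nat.card {A : ℤ → ℤ → ℤ // IsASTrap n l A ∧ motz (n + 1) (trapCat n l A) = M}

/-- Placing the trapezoid `A2` centred above the `n1`-row trapezoid `A1`. -/
def stack (n1 : ℕ) (A1 A2 : ℤ → ℤ → ℤ) : ℤ → ℤ → ℤ :=
  fun i j => if i ≤ (n1 : ℤ) then A1 i j else A2 (i - n1) (j + n1)

lemma tail_char {n l : ℕ} {A : ℤ → ℤ → ℤ} (hA : IsASTrap n l A) (j : ℤ) (m : ℤ) :
    ((∀ i, m ≤ i → A i j = 0) ∧ ∑ i ∈ Icc m (n:ℤ), A i j = 0) ∨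
    (∃ i0, m ≤ i0 ∧ A i0 j ≠ 0 ∧ (∀ i, m ≤ i → i < i0 → A i j = 0) ∧
      ∑ i ∈ Icc m (n:ℤ), A i j = (if A i0 j = 1 then 1 else 0)) := by
  obtain ⟨supp, entries, -, -, -, colalt, coltop⟩ := hA
  set P : ℤ → Prop := fun m =>
    ((∀ i, m ≤ i → A i j = 0) ∧ ∑ i ∈ Icc m (n:ℤ), A i j = 0) ∨
    (∃ i0, m ≤ i0 ∧ A i0 j ≠ 0 ∧ (∀ i, m ≤ i → i < i0 → A i j = 0) ∧
      ∑ i ∈ Icc m (n:ℤ), A i j = (if A i0 j = 1 then 1 else 0)) with hP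
  have base : ∀ m, (n:ℤ) + 1 ≤ m → P m := by
    intro m hm
    left
    constructor
    · intro i hi
      by_contra h
      have := (supp i j h).2.1
      omega
    · rw [Finset.Icc_eq_empty (by omega)]; simp
  have step : ∀ k, k ≤ (n:ℤ) + 1 → P k → P (k - 1) := by
    intro k hk hPk
    have hsplit : ∑ i ∈ Icc (k-1) (n:ℤ), A i j = A (k-1) j + ∑ i ∈ Icc k (n:ℤ), A i j := by
      have hins : Icc (k-1) (n:ℤ) = insert (k-1) (Icc k (n:ℤ)) := by
        ext x; simp only [mem_Icc, mem_insert]; omega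
      rw [hins, Finset.sum_insert (by simp only [mem_Icc]; omega)]
    by_cases h0 : A (k-1) j = 0
    · rcases hPk with ⟨hz, hs⟩ | ⟨i0, hi0, hne, hzz, hs⟩
      · left
        refine ⟨fun i hi => ?_, by rw [hsplit, h0, hs]; ring⟩
        rcases eq_or_lt_of_le hi with h|h
        · rw [← h]; exact h0
        · exact hz i (by omega)
      · right
        refine ⟨i0, by omega, hne, fun i h1 h2 => ?_, by rw [hsplit, h0, hs]; ring⟩
        rcases eq_or_lt_of_le h1 with h|h
        · rw [← h]; exact h0
        · exact hzz i (by omega) h2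
    · right
      refine ⟨k-1, le_rfl, h0, fun i h1 h2 => by omega, ?_⟩
      rcases hPk with ⟨hz, hs⟩ | ⟨i1, hi1, hne1, hzz1, hs1⟩
      · have h1 : A (k-1) j = 1 := coltop (k-1) j h0 (fun i' hi' => hz i' (by omega))
        rw [hsplit, hs, h1]; simp
      · have halt : A (k-1) j = -A i1 j :=
          colalt j (k-1) i1 (by omega) h0 hne1 (fun i hi1' hi2' => hzz1 i (by omega) hi2')
        have hv : A i1 j = -1 ∨ A i1 j = 1 := by
          rcases entries i1 j with h|h|h
          · exact Or.inl h
          · exact absurd h hne1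
          · exact Or.inr h
        rcases hv with h|h <;> rw [hsplit, hs1, halt, h] <;> norm_num
  rcases le_or_gt ((n:ℤ)+1) m with h|h
  · exact base m h
  · exact Int.le_induction_down (base ((n:ℤ)+1) le_rfl) step m (by omega)


lemma flatMap_single {α β : Type} (l : List α) (g : α → β) :
    (l.flatMap fun a => [g a]) = l.map g := by
  induction l with
  | nil => rfl
  | cons a t ih => simp [List.flatMap_cons, ih]

lemma coeM_list (n : ℕ) (f : ℤ → ℤ) :
    (List.map f (do let a ← List.range n; pure ((a:ℕ) : ℤ)))
      = (List.range n).map (fun k : ℕ => f k) := by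
  simp
  rw [flatMap_single, List.map_map]
  rfl

/-- column sum of `A` over rows `m..n`. -/
noncomputable def colS (m : ℤ) (n : ℕ) (A : ℤ → ℤ → ℤ) (j : ℤ) : ℤ := ∑ i ∈ Icc m (n:ℤ), A i j

lemma tail01 {n l : ℕ} {A : ℤ → ℤ → ℤ} (hA : IsASTrap n l A) (j m : ℤ) :
    colS m n A j = 0 ∨ colS m n A j = 1 := by
  rcases tail_char hA j m with ⟨-, h⟩ | ⟨i0, -, -, -, h⟩
  · exact Or.inl h
  · unfold colS; rw [h]; split_ifs <;> simp

lemma tail_nonneg {n l : ℕ} {A : ℤ → ℤ → ℤ} (hA : IsASTrap n l A) (j m : ℤ) :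
    0 ≤ colS m n A j := by
  rcases tail01 hA j m with h|h <;> omega

lemma tail_bottom {n l : ℕ} {A : ℤ → ℤ → ℤ} (hA : IsASTrap n l A) {j m i0 : ℤ}
    (h0 : colS m n A j = 0) (hm : m ≤ i0) (hne : A i0 j ≠ 0)
    (hz : ∀ i, m ≤ i → i < i0 → A i j = 0) : A i0 j = -1 := by
  rcases tail_char hA j m with ⟨hallz, -⟩ | ⟨i1, hi1, hne1, hzz, hs⟩
  · exact absurd (hallz i0 hm) hne
  · have : i1 = i0 := by
      rcases lt_trichotomy i1 i0 with h|h|h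
      · exact absurd (hz i1 hi1 h) hne1
      · exact h
      · exact absurd (hzz i0 hm h) hne
    subst this
    unfold colS at h0; rw [h0] at hs
    have : A i1 j ≠ 1 := by intro h; rw [if_pos h] at hs; omega
    rcases hA.2.1 i1 j with h|h|h
    · exact h
    · exact absurd h hne
    · exact absurd h this

lemma row_sum_ext {n l : ℕ} {A : ℤ → ℤ → ℤ} (hA : IsASTrap n l A) {i a b : ℤ}
    (h1 : 1 ≤ i) (h2 : i ≤ (n:ℤ)) (ha : a ≤ -i + 1) (hb : (l:ℤ) + i - 1 ≤ b) :
    ∑ j ∈ Icc a b, A i j = 1 := by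
  rw [← hA.2.2.1 i h1 h2]
  symm
  apply Finset.sum_subset
  · intro x hx; simp only [mem_Icc] at *; omega
  · intro x hx hx'
    by_contra h
    have := (hA.1 i x h).2.2
    simp only [mem_Icc] at hx'
    omega

lemma colsum_total {n l : ℕ} {A : ℤ → ℤ → ℤ} (hA : IsASTrap n l A) {m : ℤ}
    (h1 : 1 ≤ m) (h2 : m ≤ (n:ℤ) + 1) :
    ∑ j ∈ Icc (-(n : ℤ) + 1) ((l:ℤ) + n - 1), colS m n A j = (n:ℤ) + 1 - m := by
  unfold colS
  rw [Finset.sum_comm]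
  have hr : ∀ i ∈ Icc m (n:ℤ), ∑ j ∈ Icc (-(n : ℤ) + 1) ((l:ℤ) + n - 1), A i j = 1 := by
    intro i hi
    simp only [mem_Icc] at hi
    exact row_sum_ext hA (by omega) hi.2 (by omega) (by omega)
  rw [Finset.sum_congr rfl hr, Finset.sum_const, Int.card_Icc]
  simp only [nsmul_eq_mul, mul_one]
  omega

lemma cs01 {n l : ℕ} {A : ℤ → ℤ → ℤ} (hA : IsASTrap n l A) (j : ℤ) :
    colS 1 n A j = 0 ∨ colS 1 n A j = 1 := tail01 hA j 1

lemma mem_trapCat_neg {n l : ℕ} {A : ℤ → ℤ → ℤ} (hA : IsASTrap n l A) {k : ℕ}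
    (hk : k < n) : ((-((k:ℤ)+1)) ∈ trapCat n l A) ↔ colS 1 n A (-(k:ℤ)) = 1 := by
  unfold trapCat colS
  simp only [mem_insert, mem_image, mem_filter, mem_Icc]
  constructor
  · rintro (h | ⟨j, ⟨⟨hj1, hj2⟩, hpos⟩, hfj⟩)
    · omega
    · by_cases hj : j ≤ 0
      · rw [if_pos hj] at hfj
        have : j = -(k:ℤ) := by omega
        subst this
        rcases cs01 hA (-(k:ℤ)) with h|h
        · unfold colS at h; omega
        · exact h
      · rw [if_neg hj] at hfj
        have h1j : 1 ≤ j := by omega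
        have h2j : j ≤ (l:ℤ) - 1 := by omega
        have := hA.2.2.2.1 j h1j h2j
        omega
  · intro h
    right
    refine ⟨-(k:ℤ), ⟨⟨by omega, by omega⟩, by omega⟩, ?_⟩
    rw [if_pos (by omega)]
    ring

lemma mem_trapCat_pos {n l : ℕ} {A : ℤ → ℤ → ℤ} (hA : IsASTrap n l A) (hl : 1 ≤ l) {k : ℕ}
    (hk : k < n) : (((k:ℤ)+1) ∈ trapCat n l A) ↔ colS 1 n A ((l:ℤ)+k) = 1 := by
  unfold trapCat colS
  simp only [mem_insert, mem_image, mem_filter, mem_Icc]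
  constructor
  · rintro (h | ⟨j, ⟨⟨hj1, hj2⟩, hpos⟩, hfj⟩)
    · omega
    · by_cases hj : j ≤ 0
      · rw [if_pos hj] at hfj; omega
      · rw [if_neg hj] at hfj
        have : j = (l:ℤ) + k := by omega
        subst this
        rcases cs01 hA ((l:ℤ)+k) with h|h
        · unfold colS at h; omega
        · exact h
  · intro h
    right
    refine ⟨(l:ℤ)+k, ⟨⟨by omega, by omega⟩, by omega⟩, ?_⟩
    rw [if_neg (by omega)]
    ring

lemma card_pair_inter (S : Finset ℤ) {a b : ℤ} (hab : a ≠ b) :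
    (S ∩ {a, b}).card = (if a ∈ S then 1 else 0) + (if b ∈ S then 1 else 0) := by
  rw [Finset.inter_comm, ← Finset.filter_mem_eq_inter]
  by_cases ha : a ∈ S <;> by_cases hb : b ∈ S <;>
    simp [Finset.filter_insert, Finset.filter_singleton, ha, hb, hab]

lemma motz_entry {n l : ℕ} {A : ℤ → ℤ → ℤ} (hA : IsASTrap n l A) (hl : 1 ≤ l) {k : ℕ}
    (hk : k < n) :
    (((trapCat n l A) ∩ ({-((k : ℤ) + 1), (k : ℤ) + 1} : Finset ℤ)).card : ℤ)
      = colS 1 n A (-(k:ℤ)) + colS 1 n A ((l:ℤ)+k) := by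
  rw [card_pair_inter _ (by omega : -((k:ℤ)+1) ≠ (k:ℤ)+1)]
  simp only [mem_trapCat_neg hA hk, mem_trapCat_pos hA hl hk]
  rcases cs01 hA (-(k:ℤ)) with h|h <;> rcases cs01 hA ((l:ℤ)+k) with h'|h' <;>
    simp [h, h']

lemma motz_trapCat {n l : ℕ} {A : ℤ → ℤ → ℤ} (hA : IsASTrap n l A) (hl : 1 ≤ l) :
    motz (n+1) (trapCat n l A)
      = (List.range n).map (fun k : ℕ => colS 1 n A (-(k:ℤ)) + colS 1 n A ((l:ℤ)+(k:ℤ)) - 1) := by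
  unfold motz
  simp only [Nat.add_sub_cancel]
  rw [coeM_list]
  apply List.map_congr_left
  intro k hk
  rw [motz_entry hA hl (List.mem_range.mp hk)]


def botT (n1 : ℕ) (A : ℤ → ℤ → ℤ) : ℤ → ℤ → ℤ :=
  fun i j => if i ≤ (n1 : ℤ) then A i j else 0

def topT (n1 : ℕ) (A : ℤ → ℤ → ℤ) : ℤ → ℤ → ℤ :=
  fun i j => if 1 ≤ i then A (i + n1) (j - n1) else 0

lemma Icc_split (f : ℤ → ℤ) {a b c : ℤ} (h1 : a ≤ b + 1) (h2 : b ≤ c) :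
    ∑ j ∈ Icc a c, f j = ∑ j ∈ Icc a b, f j + ∑ j ∈ Icc (b+1) c, f j := by
  rw [← Finset.sum_union (by simp only [Finset.disjoint_left, mem_Icc]; omega)]
  congr 1
  ext x
  simp only [mem_Icc, mem_union]
  omega

lemma sum_range_neg_eq_Icc (g : ℤ → ℤ) (m : ℕ) :
    ∑ k ∈ Finset.range m, g (-(k:ℤ)) = ∑ j ∈ Icc (1 - (m:ℤ)) 0, g j := by
  induction m with
  | zero => rw [Finset.Icc_eq_empty (by omega)]; simp
  | succ m ih =>
    rw [Finset.sum_range_succ, ih]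
    have hins : Icc (1 - ((m:ℤ)+1)) 0 = insert (-(m:ℤ)) (Icc (1 - (m:ℤ)) 0) := by
      ext x; simp only [mem_Icc, mem_insert]; omega
    push_cast
    rw [hins, Finset.sum_insert (by simp only [mem_Icc]; omega)]
    ring

lemma sum_range_shift_eq_Icc (g : ℤ → ℤ) (c : ℤ) (m : ℕ) :
    ∑ k ∈ Finset.range m, g (c + (k:ℤ)) = ∑ j ∈ Icc c (c + (m:ℤ) - 1), g j := by
  induction m with
  | zero => rw [Finset.Icc_eq_empty (by omega)]; simp
  | succ m ih =>
    rw [Finset.sum_range_succ, ih]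
    have hins : Icc c (c + ((m:ℤ)+1) - 1) = insert (c + (m:ℤ)) (Icc c (c + (m:ℤ) - 1)) := by
      ext x; simp only [mem_Icc, mem_insert]; omega
    push_cast
    rw [hins, Finset.sum_insert (by simp only [mem_Icc]; omega)]
    ring

lemma cs2_vanish {n l : ℕ} {A : ℤ → ℤ → ℤ} (hA : IsASTrap n l A) (hl : 1 ≤ l)
    {n1 : ℕ} (hn1 : n1 ≤ n)
    (key1 : ∑ j ∈ Icc (1 - (n1:ℤ)) 0, colS 1 n A j
              + ∑ j ∈ Icc (l:ℤ) ((l:ℤ) + n1 - 1), colS 1 n A j = (n1:ℤ)) :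
    ∀ j, 1 - (n1:ℤ) ≤ j → j ≤ (l:ℤ) + n1 - 1 → colS ((n1:ℤ)+1) n A j = 0 := by
  -- outer columns: bottom rows vanish
  have houter : ∀ j : ℤ, (j ≤ -(n1:ℤ) ∨ (l:ℤ) + n1 ≤ j) →
      colS ((n1:ℤ)+1) n A j = colS 1 n A j := by
    intro j hj
    have hsplit : colS 1 n A j
        = ∑ i ∈ Icc (1:ℤ) (n1:ℤ), A i j + ∑ i ∈ Icc ((n1:ℤ)+1) (n:ℤ), A i j := by
      have h0 : (0:ℤ) + 1 = 1 := by ring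
      unfold colS
      have := Icc_split (fun i => A i j) (a := 1) (b := (n1:ℤ)) (c := (n:ℤ))
        (by omega) (by omega)
      exact this
    have hz : ∑ i ∈ Icc (1:ℤ) (n1:ℤ), A i j = 0 := by
      apply Finset.sum_eq_zero
      intro i hi
      simp only [mem_Icc] at hi
      by_contra h
      have := hA.1 i j h
      omega
    unfold colS at *
    omega
  -- total column sums
  have total1 := colsum_total hA (m := 1) (by omega) (by omega)
  have total2 := colsum_total hA (m := (n1:ℤ)+1) (by omega) (by omega)
  -- split total1 into 5 regions
  have s1 : ∑ j ∈ Icc (-(n : ℤ) + 1) ((l:ℤ) + n - 1), colS 1 n A j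
      = ∑ j ∈ Icc (-(n : ℤ) + 1) (-(n1:ℤ)), colS 1 n A j
        + ∑ j ∈ Icc (1 - (n1:ℤ)) ((l:ℤ) + n - 1), colS 1 n A j := by
    rw [Icc_split (colS 1 n A) (a := -(n : ℤ) + 1) (b := -(n1:ℤ)) (c := (l:ℤ) + n - 1)
      (by omega) (by omega), show -(n1:ℤ) + 1 = 1 - (n1:ℤ) from by ring]
  have s2 : ∑ j ∈ Icc (1 - (n1:ℤ)) ((l:ℤ) + n - 1), colS 1 n A j
      = ∑ j ∈ Icc (1 - (n1:ℤ)) ((l:ℤ) + n1 - 1), colS 1 n A j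
        + ∑ j ∈ Icc ((l:ℤ) + n1) ((l:ℤ) + n - 1), colS 1 n A j := by
    rw [Icc_split (colS 1 n A) (a := 1 - (n1:ℤ)) (b := (l:ℤ) + n1 - 1) (c := (l:ℤ) + n - 1)
      (by omega) (by omega), show (l:ℤ) + n1 - 1 + 1 = (l:ℤ) + n1 from by ring]
  have s3 : ∑ j ∈ Icc (1 - (n1:ℤ)) ((l:ℤ) + n1 - 1), colS 1 n A j
      = ∑ j ∈ Icc (1 - (n1:ℤ)) 0, colS 1 n A j
        + ∑ j ∈ Icc (1:ℤ) ((l:ℤ) - 1), colS 1 n A j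
        + ∑ j ∈ Icc (l:ℤ) ((l:ℤ) + n1 - 1), colS 1 n A j := by
    rw [Icc_split (colS 1 n A) (a := 1 - (n1:ℤ)) (b := 0) (c := (l:ℤ) + n1 - 1)
      (by omega) (by omega), show (0:ℤ) + 1 = 1 from by ring,
      Icc_split (colS 1 n A) (a := (1:ℤ)) (b := (l:ℤ) - 1) (c := (l:ℤ) + n1 - 1)
      (by omega) (by omega), show ((l:ℤ) - 1) + 1 = (l:ℤ) from by ring]
    ring
  have hmid : ∑ j ∈ Icc (1:ℤ) ((l:ℤ) - 1), colS 1 n A j = 0 := by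
    apply Finset.sum_eq_zero
    intro j hj
    simp only [mem_Icc] at hj
    exact hA.2.2.2.1 j hj.1 hj.2
  -- outer total = n - n1
  have houterTotal : ∑ j ∈ Icc (-(n : ℤ) + 1) (-(n1:ℤ)), colS 1 n A j
      + ∑ j ∈ Icc ((l:ℤ) + n1) ((l:ℤ) + n - 1), colS 1 n A j = (n:ℤ) - n1 := by
    omega
  -- split total2 into 3 regions
  have t1 : ∑ j ∈ Icc (-(n : ℤ) + 1) ((l:ℤ) + n - 1), colS ((n1:ℤ)+1) n A j
      = ∑ j ∈ Icc (-(n : ℤ) + 1) (-(n1:ℤ)), colS ((n1:ℤ)+1) n A j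
        + ∑ j ∈ Icc (1 - (n1:ℤ)) ((l:ℤ) + n1 - 1), colS ((n1:ℤ)+1) n A j
        + ∑ j ∈ Icc ((l:ℤ) + n1) ((l:ℤ) + n - 1), colS ((n1:ℤ)+1) n A j := by
    rw [Icc_split (colS ((n1:ℤ)+1) n A) (a := -(n : ℤ) + 1) (b := -(n1:ℤ)) (c := (l:ℤ) + n - 1)
      (by omega) (by omega), show -(n1:ℤ) + 1 = 1 - (n1:ℤ) from by ring,
      Icc_split (colS ((n1:ℤ)+1) n A) (a := 1 - (n1:ℤ)) (b := (l:ℤ) + n1 - 1) (c := (l:ℤ) + n - 1)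
      (by omega) (by omega), show (l:ℤ) + n1 - 1 + 1 = (l:ℤ) + n1 from by ring]
    ring
  have hcongL : ∑ j ∈ Icc (-(n : ℤ) + 1) (-(n1:ℤ)), colS ((n1:ℤ)+1) n A j
      = ∑ j ∈ Icc (-(n : ℤ) + 1) (-(n1:ℤ)), colS 1 n A j := by
    apply Finset.sum_congr rfl
    intro j hj
    simp only [mem_Icc] at hj
    exact houter j (Or.inl hj.2)
  have hcongR : ∑ j ∈ Icc ((l:ℤ) + n1) ((l:ℤ) + n - 1), colS ((n1:ℤ)+1) n A j
      = ∑ j ∈ Icc ((l:ℤ) + n1) ((l:ℤ) + n - 1), colS 1 n A j := by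
    apply Finset.sum_congr rfl
    intro j hj
    simp only [mem_Icc] at hj
    exact houter j (Or.inr hj.1)
  have hmid2 : ∑ j ∈ Icc (1 - (n1:ℤ)) ((l:ℤ) + n1 - 1), colS ((n1:ℤ)+1) n A j = 0 := by
    omega
  intro j hj1 hj2
  have := (Finset.sum_eq_zero_iff_of_nonneg
    (fun j _ => tail_nonneg hA j ((n1:ℤ)+1))).mp hmid2 j (by simp only [mem_Icc]; omega)
  exact this


lemma sum_Icc_shift (g : ℤ → ℤ) (a b c : ℤ) :
    ∑ j ∈ Icc (a + c) (b + c), g j = ∑ j ∈ Icc a b, g (j + c) := by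
  rw [← map_add_right_Icc a b c, Finset.sum_map]
  rfl

lemma colS_split {n n1 : ℕ} (hn1 : n1 ≤ n) (A : ℤ → ℤ → ℤ) (j : ℤ) :
    colS 1 n A j = ∑ i ∈ Icc (1:ℤ) (n1:ℤ), A i j + colS ((n1:ℤ)+1) n A j := by
  unfold colS
  exact Icc_split (fun i => A i j) (by omega) (by omega)

lemma colS_bot {n1 : ℕ} (A : ℤ → ℤ → ℤ) (j : ℤ) :
    colS 1 n1 (botT n1 A) j = ∑ i ∈ Icc (1:ℤ) (n1:ℤ), A i j := by
  unfold colS botT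
  apply Finset.sum_congr rfl
  intro i hi
  simp only [mem_Icc] at hi
  rw [if_pos hi.2]

lemma colS_top {n n1 n2 : ℕ} (hn : n = n1 + n2) (A : ℤ → ℤ → ℤ) (j : ℤ) :
    colS 1 n2 (topT n1 A) j = colS ((n1:ℤ)+1) n A (j - n1) := by
  unfold colS topT
  have e1 : ∀ i ∈ Icc (1:ℤ) (n2:ℤ),
      (if 1 ≤ i then A (i + n1) (j - n1) else 0) = A (i + n1) (j - n1) := by
    intro i hi; simp only [mem_Icc] at hi; rw [if_pos hi.1]
  rw [Finset.sum_congr rfl e1, ← sum_Icc_shift (fun i => A i (j - n1)) 1 (n2:ℤ) (n1:ℤ)]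
  congr 1
  · congr 1 <;> omega
  
lemma bot_isTrap {n l n1 : ℕ} {A : ℤ → ℤ → ℤ} (hA : IsASTrap n l A) (hn1 : n1 ≤ n)
    (hcs2 : ∀ j, 1 - (n1:ℤ) ≤ j → j ≤ (l:ℤ) + n1 - 1 → colS ((n1:ℤ)+1) n A j = 0) :
    IsASTrap n1 l (botT n1 A) := by
  refine ⟨?_, ?_, ?_, ?_, ?_, ?_, ?_⟩
  · -- support
    intro i j h
    unfold botT at h
    by_cases hi : i ≤ (n1:ℤ)
    · rw [if_pos hi] at h
      have := hA.1 i j h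
      omega
    · rw [if_neg hi] at h; exact absurd rfl h
  · -- entries
    intro i j
    unfold botT
    split_ifs
    · exact hA.2.1 i j
    · exact Or.inr (Or.inl rfl)
  · -- row sums
    intro i h1 h2
    have : ∀ j ∈ Icc (-i+1) ((l:ℤ)+i-1), botT n1 A i j = A i j := by
      intro j hj; unfold botT; rw [if_pos h2]
    rw [Finset.sum_congr rfl this]
    exact hA.2.2.1 i h1 (by omega)
  · -- middle columns
    intro j hj1 hj2
    have e : ∑ i ∈ Icc (1:ℤ) (n1:ℤ), botT n1 A i j = ∑ i ∈ Icc (1:ℤ) (n1:ℤ), A i j := by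
      apply Finset.sum_congr rfl
      intro i hi; simp only [mem_Icc] at hi; unfold botT; rw [if_pos hi.2]
    rw [e]
    have hsplit := colS_split hn1 A j
    have hz := hA.2.2.2.1 j hj1 hj2
    have hc2 := hcs2 j (by omega) (by omega)
    unfold colS at hsplit hc2
    omega
  · -- RowAlt
    intro i j1 j2 hlt h1 h2 hz
    unfold botT at *
    by_cases hi : i ≤ (n1:ℤ)
    · simp only [if_pos hi] at *
      exact hA.2.2.2.2.1 i j1 j2 hlt h1 h2 hz
    · simp only [if_neg hi] at h1; exact absurd rfl h1
  · -- ColAlt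
    intro j i1 i2 hlt h1 h2 hz
    unfold botT at *
    by_cases hi2 : i2 ≤ (n1:ℤ)
    · have hi1 : i1 ≤ (n1:ℤ) := by omega
      simp only [if_pos hi1, if_pos hi2] at *
      refine hA.2.2.2.2.2.1 j i1 i2 hlt h1 h2 ?_
      intro i ha hb
      have := hz i ha hb
      rw [if_pos (by omega)] at this
      exact this
    · simp only [if_neg hi2] at h2; exact absurd rfl h2
  · -- ColTopPos
    intro i j h hz
    unfold botT at h hz ⊢
    by_cases hi : i ≤ (n1:ℤ)
    · rw [if_pos hi] at h ⊢
      by_cases habove : ∀ i', i < i' → A i' j = 0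
      · exact hA.2.2.2.2.2.2 i j h habove
      · push_neg at habove
        obtain ⟨i', hi', hne'⟩ := habove
        have hi'n1 : (n1:ℤ) < i' := by
          by_contra hc
          have := hz i' hi'
          rw [if_pos (by omega)] at this
          exact absurd this hne'
        have hjrange := hA.1 i j h
        have hc2 := hcs2 j (by omega) (by omega)
        rcases tail_char hA j ((n1:ℤ)+1) with ⟨hallz, -⟩ | ⟨i0, hi0, hne0, hz0, hs0⟩
        · exact absurd (hallz i' (by omega)) hne'
        · have hv0 : A i0 j = -1 := by
            unfold colS at hc2
            rw [hc2] at hs0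
            have : A i0 j ≠ 1 := by intro hc; rw [if_pos hc] at hs0; omega
            rcases hA.2.1 i0 j with h'|h'|h'
            · exact h'
            · exact absurd h' hne0
            · exact absurd h' this
          have halt : A i j = -A i0 j := by
            refine hA.2.2.2.2.2.1 j i i0 (by omega) h hne0 ?_
            intro x ha hb
            by_cases hx : x ≤ (n1:ℤ)
            · have := hz x ha
              rw [if_pos hx] at this
              exact this
            · exact hz0 x (by omega) hb
          rw [halt, hv0]
          ring
    · rw [if_neg hi] at h; exact absurd rfl h

lemma top_isTrap {n l n1 n2 : ℕ} {A : ℤ → ℤ → ℤ} (hA : IsASTrap n l A) (hn : n = n1 + n2)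
    (hcs2 : ∀ j, 1 - (n1:ℤ) ≤ j → j ≤ (l:ℤ) + n1 - 1 → colS ((n1:ℤ)+1) n A j = 0) :
    IsASTrap n2 (l + 2*n1) (topT n1 A) := by
  have hL : ((l + 2*n1 : ℕ) : ℤ) = (l:ℤ) + 2*n1 := by push_cast; ring
  refine ⟨?_, ?_, ?_, ?_, ?_, ?_, ?_⟩
  · intro i j h
    unfold topT at h
    by_cases hi : 1 ≤ i
    · rw [if_pos hi] at h
      have := hA.1 (i + n1) (j - n1) h
      omega
    · rw [if_neg hi] at h; exact absurd rfl h
  · intro i j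
    unfold topT
    split_ifs
    · exact hA.2.1 _ _
    · exact Or.inr (Or.inl rfl)
  · -- row sums
    intro i h1 h2
    have e1 : ∀ j ∈ Icc (-i+1) (((l + 2*n1 : ℕ):ℤ) + i - 1),
        topT n1 A i j = A (i + n1) (j + -(n1:ℤ)) := by
      intro j hj; unfold topT; rw [if_pos h1, sub_eq_add_neg]
    rw [Finset.sum_congr rfl e1,
      ← sum_Icc_shift (fun y => A (i + n1) y) (-i+1) (((l + 2*n1 : ℕ):ℤ) + i - 1) (-(n1:ℤ))]
    exact row_sum_ext hA (by omega) (by omega) (by omega) (by omega)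
  · -- middle columns
    intro j hj1 hj2
    have e := colS_top hn A j
    unfold colS at e
    rw [e]
    exact hcs2 (j - n1) (by omega) (by omega)
  · -- RowAlt
    intro i j1 j2 hlt h1 h2 hz
    unfold topT at *
    by_cases hi : 1 ≤ i
    · simp only [if_pos hi] at *
      refine hA.2.2.2.2.1 (i + n1) (j1 - n1) (j2 - n1) (by omega) h1 h2 ?_
      intro y ha hb
      have := hz (y + n1) (by omega) (by omega)
      simpa using this
    · simp only [if_neg hi] at h1; exact absurd rfl h1
  · -- ColAlt
    intro j i1 i2 hlt h1 h2 hz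
    unfold topT at *
    by_cases hi1 : 1 ≤ i1
    · have hi2 : 1 ≤ i2 := by omega
      simp only [if_pos hi1, if_pos hi2] at *
      refine hA.2.2.2.2.2.1 (j - n1) (i1 + n1) (i2 + n1) (by omega) h1 h2 ?_
      intro x ha hb
      have := hz (x - n1) (by omega) (by omega)
      rw [if_pos (by omega)] at this
      simpa using this
    · simp only [if_neg hi1] at h1; exact absurd rfl h1
  · -- ColTopPos
    intro i j h hz
    unfold topT at h hz ⊢
    by_cases hi : 1 ≤ i
    · rw [if_pos hi] at h ⊢
      refine hA.2.2.2.2.2.2 (i + n1) (j - n1) h ?_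
      intro i' hi'
      have := hz (i' - n1) (by omega)
      rw [if_pos (by omega)] at this
      simpa using this
    · rw [if_neg hi] at h; exact absurd rfl h

lemma colS_stack {n1 n2 : ℕ} (A1 A2 : ℤ → ℤ → ℤ) (j : ℤ) :
    colS 1 (n1+n2) (stack n1 A1 A2) j = colS 1 n1 A1 j + colS 1 n2 A2 (j + n1) := by
  rw [colS_split (show n1 ≤ n1+n2 by omega)]
  congr 1
  · unfold colS stack
    apply Finset.sum_congr rfl
    intro i hi
    simp only [mem_Icc] at hi
    rw [if_pos hi.2]
  · unfold colS stack
    have e1 : ∀ i ∈ Icc ((n1:ℤ)+1) ((n1+n2 : ℕ):ℤ),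
        (if i ≤ (n1:ℤ) then A1 i j else A2 (i - n1) (j + n1)) = A2 (i - n1) (j + n1) := by
      intro i hi; simp only [mem_Icc] at hi; rw [if_neg (by omega)]
    rw [Finset.sum_congr rfl e1,
      show ((n1:ℤ)+1) = 1 + (n1:ℤ) from by ring,
      show (((n1+n2 : ℕ)):ℤ) = (n2:ℤ) + n1 from by push_cast; ring,
      sum_Icc_shift (fun i => A2 (i - n1) (j + n1)) 1 (n2:ℤ) (n1:ℤ)]
    apply Finset.sum_congr rfl
    intro i _
    rw [show i + (n1:ℤ) - n1 = i from by ring]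

lemma stack_isTrap {n1 n2 l : ℕ} {A1 A2 : ℤ → ℤ → ℤ}
    (h1 : IsASTrap n1 l A1) (h2 : IsASTrap n2 (l + 2*n1) A2) :
    IsASTrap (n1+n2) l (stack n1 A1 A2) := by
  have hL : ((l + 2*n1 : ℕ) : ℤ) = (l:ℤ) + 2*n1 := by push_cast; ring
  refine ⟨?_, ?_, ?_, ?_, ?_, ?_, ?_⟩
  · -- support
    intro i j h
    unfold stack at h
    by_cases hi : i ≤ (n1:ℤ)
    · rw [if_pos hi] at h
      have := h1.1 i j h
      omega
    · rw [if_neg hi] at h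
      have := h2.1 (i - n1) (j + n1) h
      omega
  · intro i j
    unfold stack
    split_ifs
    · exact h1.2.1 _ _
    · exact h2.2.1 _ _
  · -- row sums
    intro i hi1 hi2
    unfold stack
    by_cases hi : i ≤ (n1:ℤ)
    · have e : ∀ j ∈ Icc (-i+1) ((l:ℤ)+i-1),
          (if i ≤ (n1:ℤ) then A1 i j else A2 (i - n1) (j + n1)) = A1 i j := by
        intro j hj; rw [if_pos hi]
      rw [Finset.sum_congr rfl e]
      exact row_sum_ext h1 hi1 hi (by omega) (by omega)
    · have e : ∀ j ∈ Icc (-i+1) ((l:ℤ)+i-1),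
          (if i ≤ (n1:ℤ) then A1 i j else A2 (i - n1) (j + n1)) = A2 (i - n1) (j + n1) := by
        intro j hj; rw [if_neg hi]
      rw [Finset.sum_congr rfl e,
        ← sum_Icc_shift (fun y => A2 (i - n1) y) (-i+1) ((l:ℤ)+i-1) (n1:ℤ)]
      push_cast at hi2
      exact row_sum_ext h2 (by omega) (by omega) (by omega) (by omega)
  · -- middle columns
    intro j hj1 hj2
    have e := colS_stack (n1 := n1) (n2 := n2) A1 A2 j
    unfold colS at e
    rw [e]
    have z1 := h1.2.2.2.1 j hj1 hj2
    have z2 := h2.2.2.2.1 (j + n1) (by omega) (by rw [hL]; omega)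
    unfold colS at z1 z2  -- no-op
    omega
  · -- RowAlt
    intro i j1 j2 hlt ha hb hz
    unfold stack at *
    by_cases hi : i ≤ (n1:ℤ)
    · simp only [if_pos hi] at *
      exact h1.2.2.2.2.1 i j1 j2 hlt ha hb hz
    · simp only [if_neg hi] at *
      refine h2.2.2.2.2.1 (i - n1) (j1 + n1) (j2 + n1) (by omega) ha hb ?_
      intro y hy1 hy2
      have := hz (y - n1) (by omega) (by omega)
      simpa using this
  · -- ColAlt
    intro j i1 i2 hlt ha hb hz
    unfold stack at *
    by_cases hi2 : i2 ≤ (n1:ℤ)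
    · have hi1 : i1 ≤ (n1:ℤ) := by omega
      simp only [if_pos hi1, if_pos hi2] at *
      refine h1.2.2.2.2.2.1 j i1 i2 hlt ha hb ?_
      intro x hx1 hx2
      have := hz x hx1 hx2
      rw [if_pos (by omega)] at this
      exact this
    · by_cases hi1 : i1 ≤ (n1:ℤ)
      · -- junction
        rw [if_pos hi1] at ha ⊢
        rw [if_neg hi2] at hb ⊢
        have hjr := h1.1 i1 j ha
        have hv1 : A1 i1 j = 1 := by
          refine h1.2.2.2.2.2.2 i1 j ha ?_
          intro i' hi'
          by_cases hi'n : i' ≤ (n1:ℤ)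
          · have := hz i' hi' (by omega)
            rw [if_pos hi'n] at this
            exact this
          · by_contra hc
            have := h1.1 i' j hc
            omega
        have hv2 : A2 (i2 - n1) (j + n1) = -1 := by
          refine tail_bottom h2 ?_ (show (1:ℤ) ≤ i2 - n1 by omega) hb ?_
          · exact h2.2.2.2.1 (j + n1) (by omega) (by rw [hL]; omega)
          · intro x hx1 hx2
            have := hz (x + n1) (by omega) (by omega)
            rw [if_neg (by omega)] at this
            simpa using this
        rw [hv1, hv2]
        ring
      · rw [if_neg hi1] at ha ⊢
        rw [if_neg hi2] at hb ⊢
        refine h2.2.2.2.2.2.1 (j + n1) (i1 - n1) (i2 - n1) (by omega) ha hb ?_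
        intro x hx1 hx2
        have := hz (x + n1) (by omega) (by omega)
        rw [if_neg (by omega)] at this
        simpa using this
  · -- ColTopPos
    intro i j h hz
    unfold stack at *
    by_cases hi : i ≤ (n1:ℤ)
    · rw [if_pos hi] at h ⊢
      refine h1.2.2.2.2.2.2 i j h ?_
      intro i' hi'
      by_cases hi'n : i' ≤ (n1:ℤ)
      · have := hz i' hi'
        rw [if_pos hi'n] at this
        exact this
      · by_contra hc
        have := h1.1 i' j hc
        omega
    · rw [if_neg hi] at h ⊢
      refine h2.2.2.2.2.2.2 (i - n1) (j + n1) h ?_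
      intro i' hi'
      have := hz (i' + n1) (by omega)
      rw [if_neg (by omega)] at this
      simpa using this


lemma list_sum_map_range (g : ℕ → ℤ) (m : ℕ) :
    ((List.range m).map g).sum = ∑ k ∈ Finset.range m, g k := by
  induction m with
  | zero => simp
  | succ m ih => rw [List.range_succ, List.map_append, List.sum_append,
      Finset.sum_range_succ, ih]; simp

/-- The forward splitting: a trapezoid whose Motzkin path splits gives two trapezoids. -/
lemma forward_split {l n1 n2 : ℕ} (hl : 1 ≤ l) {M1 M2 : List ℤ}
    (hm1 : M1.length = n1) (hm2 : M2.length = n2) (hsum1 : M1.sum = 0)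
    {A : ℤ → ℤ → ℤ} (hA : IsASTrap (n1+n2) l A)
    (hM : motz (n1+n2+1) (trapCat (n1+n2) l A) = M1 ++ M2) :
    IsASTrap n1 l (botT n1 A) ∧ IsASTrap n2 (l+2*n1) (topT n1 A) ∧
    motz (n1+1) (trapCat n1 l (botT n1 A)) = M1 ∧
    motz (n2+1) (trapCat n2 (l+2*n1) (topT n1 A)) = M2 := by
  set n : ℕ := n1 + n2 with hn
  have hn1 : n1 ≤ n := by omega
  have hMG : M1 ++ M2 = (List.range n).map
      (fun k : ℕ => colS 1 n A (-(k:ℤ)) + colS 1 n A ((l:ℤ)+(k:ℤ)) - 1) := by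
    rw [← hM, motz_trapCat hA hl]
  -- M1 as a map
  have hM1eq : M1 = (List.range n1).map
      (fun k : ℕ => colS 1 n A (-(k:ℤ)) + colS 1 n A ((l:ℤ)+(k:ℤ)) - 1) := by
    have := congrArg (List.take n1) hMG
    rwa [← hm1, List.take_left, hm1, ← List.map_take, List.take_range,
      Nat.min_eq_left hn1] at this
  -- key counting identity
  have key1 : ∑ j ∈ Icc (1 - (n1:ℤ)) 0, colS 1 n A j
      + ∑ j ∈ Icc (l:ℤ) ((l:ℤ) + n1 - 1), colS 1 n A j = (n1:ℤ) := by
    have hs : ∑ k ∈ Finset.range n1,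
        (colS 1 n A (-(k:ℤ)) + colS 1 n A ((l:ℤ)+(k:ℤ)) - 1) = 0 := by
      rw [← list_sum_map_range, ← hM1eq, hsum1]
    rw [← sum_range_neg_eq_Icc, ← sum_range_shift_eq_Icc]
    have e : ∑ k ∈ Finset.range n1,
        (colS 1 n A (-(k:ℤ)) + colS 1 n A ((l:ℤ)+(k:ℤ)) - 1)
        = ∑ k ∈ Finset.range n1, colS 1 n A (-(k:ℤ))
          + ∑ k ∈ Finset.range n1, colS 1 n A ((l:ℤ)+(k:ℤ))
          - n1 := by
      rw [Finset.sum_sub_distrib, Finset.sum_add_distrib, Finset.sum_const,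
        Finset.card_range, nsmul_eq_mul, mul_one]
    omega
  have hcs2 := cs2_vanish hA hl hn1 key1
  refine ⟨bot_isTrap hA hn1 hcs2, top_isTrap hA hn hcs2, ?_, ?_⟩
  · -- motz of bottom = M1
    rw [motz_trapCat (bot_isTrap hA hn1 hcs2) hl, hM1eq]
    apply List.map_congr_left
    intro k hk
    rw [List.mem_range] at hk
    have e1 : colS 1 n1 (botT n1 A) (-(k:ℤ)) = colS 1 n A (-(k:ℤ)) := by
      rw [colS_bot, colS_split hn1 A, hcs2 (-(k:ℤ)) (by omega) (by omega)]
      ring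
    have e2 : colS 1 n1 (botT n1 A) ((l:ℤ)+(k:ℤ)) = colS 1 n A ((l:ℤ)+(k:ℤ)) := by
      rw [colS_bot, colS_split hn1 A, hcs2 ((l:ℤ)+(k:ℤ)) (by omega) (by omega)]
      ring
    rw [e1, e2]
  · -- motz of top = M2
    rw [motz_trapCat (top_isTrap hA hn hcs2) (by omega)]
    have hlen2 : M2.length = n2 := hm2
    apply List.ext_getElem (by simp [hlen2])
    intro k hk1 hk2
    simp only [List.getElem_map, List.getElem_range, List.length_map,
      List.length_range] at hk1 ⊢
    -- identify entries
    have hkn2 : k < n2 := by simpa using hk1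
    have e1 : colS 1 n2 (topT n1 A) (-(k:ℤ)) = colS 1 n A (-((n1+k : ℕ):ℤ)) := by
      rw [colS_top hn, colS_split hn1 A]
      have hz : ∑ i ∈ Icc (1:ℤ) (n1:ℤ), A i (-((n1+k : ℕ):ℤ)) = 0 := by
        apply Finset.sum_eq_zero
        intro i hi
        simp only [mem_Icc] at hi
        by_contra h
        have := hA.1 i _ h
        push_cast at this ⊢
        omega
      rw [show -(k:ℤ) - (n1:ℤ) = -((n1+k : ℕ):ℤ) from by push_cast; ring, hz]
      ring
    have e2 : colS 1 n2 (topT n1 A) (((l + 2*n1 : ℕ):ℤ)+(k:ℤ))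
        = colS 1 n A ((l:ℤ)+((n1+k : ℕ):ℤ)) := by
      rw [colS_top hn, colS_split hn1 A]
      have hz : ∑ i ∈ Icc (1:ℤ) (n1:ℤ), A i ((l:ℤ)+((n1+k : ℕ):ℤ)) = 0 := by
        apply Finset.sum_eq_zero
        intro i hi
        simp only [mem_Icc] at hi
        by_contra h
        have := hA.1 i _ h
        push_cast at this ⊢
        omega
      rw [show ((l + 2*n1 : ℕ):ℤ)+(k:ℤ) - (n1:ℤ) = (l:ℤ)+((n1+k : ℕ):ℤ) from by
        push_cast; ring, hz]
      ring
    simp only [e1, e2]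
    -- entry of M1 ++ M2 at n1 + k
    have hidx : n1 + k < (M1 ++ M2).length := by
      simp [hm1, hlen2]; omega
    have hget : (M1 ++ M2)[n1 + k]'hidx = M2[k]'(by omega) := by
      rw [List.getElem_append_right (by omega)]
      congr 1
      omega
    have hgetG : (M1 ++ M2)[n1 + k]'hidx
        = colS 1 n A (-((n1+k : ℕ):ℤ)) + colS 1 n A ((l:ℤ)+((n1+k : ℕ):ℤ)) - 1 := by
      rw [List.getElem_of_eq hMG]
      simp only [List.getElem_map, List.getElem_range]
    rw [← hget, hgetG]

lemma backward_merge {l n1 n2 : ℕ} (hl : 1 ≤ l) {M1 M2 : List ℤ}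
    (hm1 : M1.length = n1) (hm2 : M2.length = n2)
    {A1 A2 : ℤ → ℤ → ℤ} (h1 : IsASTrap n1 l A1) (h2 : IsASTrap n2 (l + 2*n1) A2)
    (hM1 : motz (n1+1) (trapCat n1 l A1) = M1)
    (hM2 : motz (n2+1) (trapCat n2 (l + 2*n1) A2) = M2) :
    motz (n1+n2+1) (trapCat (n1+n2) l (stack n1 A1 A2)) = M1 ++ M2 := by
  have hL : ((l + 2*n1 : ℕ) : ℤ) = (l:ℤ) + 2*n1 := by push_cast; ring
  have hG1 : M1 = (List.range n1).map
      (fun k : ℕ => colS 1 n1 A1 (-(k:ℤ)) + colS 1 n1 A1 ((l:ℤ)+(k:ℤ)) - 1) := by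
    rw [← hM1, motz_trapCat h1 hl]
  have hG2 : M2 = (List.range n2).map
      (fun k : ℕ => colS 1 n2 A2 (-(k:ℤ)) + colS 1 n2 A2 (((l + 2*n1 : ℕ):ℤ)+(k:ℤ)) - 1) := by
    rw [← hM2, motz_trapCat h2 (by omega)]
  rw [motz_trapCat (stack_isTrap h1 h2) hl]
  apply List.ext_getElem (by simp [hm1, hm2])
  intro k hk1 hk2
  simp only [List.getElem_map, List.getElem_range, List.length_map, List.length_range] at hk1 ⊢
  have hkn : k < n1 + n2 := by simpa using hk1
  rw [colS_stack A1 A2 (-(k:ℤ)), colS_stack A1 A2 ((l:ℤ)+(k:ℤ))]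
  by_cases hcase : k < n1
  · -- bottom part
    have z1 : colS 1 n2 A2 (-(k:ℤ) + n1) = 0 :=
      h2.2.2.2.1 (-(k:ℤ) + n1) (by omega) (by omega)
    have z2 : colS 1 n2 A2 ((l:ℤ)+(k:ℤ) + n1) = 0 :=
      h2.2.2.2.1 ((l:ℤ)+(k:ℤ) + n1) (by omega) (by omega)
    rw [z1, z2]
    have hget : (M1 ++ M2)[k]'(by simp [hm1, hm2]; omega) = M1[k]'(by omega) :=
      List.getElem_append_left (by omega)
    rw [hget, List.getElem_of_eq hG1 (by omega)]
    simp only [List.getElem_map, List.getElem_range]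
    ring
  · -- top part
    have hz1 : colS 1 n1 A1 (-(k:ℤ)) = 0 := by
      apply Finset.sum_eq_zero
      intro i hi
      simp only [mem_Icc] at hi
      by_contra h
      have := h1.1 i _ h
      omega
    have hz2 : colS 1 n1 A1 ((l:ℤ)+(k:ℤ)) = 0 := by
      apply Finset.sum_eq_zero
      intro i hi
      simp only [mem_Icc] at hi
      by_contra h
      have := h1.1 i _ h
      omega
    rw [hz1, hz2]
    have hget : (M1 ++ M2)[k]'(by simp [hm1, hm2]; omega)
        = M2[k - n1]'(by omega) := by
      rw [List.getElem_append_right (by omega)]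
      congr 1
      omega
    rw [hget, List.getElem_of_eq hG2 (by omega)]
    simp only [List.getElem_map, List.getElem_range]
    have c1 : -(k:ℤ) + n1 = -(((k - n1 : ℕ)):ℤ) := by
      have : n1 ≤ k := by omega
      push_cast [this]
      ring
    have c2 : (l:ℤ)+(k:ℤ) + n1 = ((l + 2*n1 : ℕ):ℤ) + (((k - n1 : ℕ)):ℤ) := by
      have : n1 ≤ k := by omega
      push_cast [this]
      ring
    rw [c1, c2]
    ring

lemma stack_bot_top (n1 : ℕ) (A : ℤ → ℤ → ℤ) : stack n1 (botT n1 A) (topT n1 A) = A := by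
  funext i j
  unfold stack botT topT
  by_cases hi : i ≤ (n1:ℤ)
  · rw [if_pos hi, if_pos hi]
  · rw [if_neg hi, if_pos (by omega : (1:ℤ) ≤ i - n1),
      show i - (n1:ℤ) + n1 = i from by ring, show j + (n1:ℤ) - n1 = j from by ring]

lemma bot_stack {n1 n2 l : ℕ} {A1 A2 : ℤ → ℤ → ℤ} (h1 : IsASTrap n1 l A1) :
    botT n1 (stack n1 A1 A2) = A1 := by
  funext i j
  unfold botT stack
  by_cases hi : i ≤ (n1:ℤ)
  · rw [if_pos hi, if_pos hi]
  · rw [if_neg hi]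
    by_contra h
    have := h1.1 i j (fun hc => h hc.symm)
    omega

lemma top_stack {n1 n2 l : ℕ} {A1 A2 : ℤ → ℤ → ℤ} (h2 : IsASTrap n2 l A2) :
    topT n1 (stack n1 A1 A2) = A2 := by
  funext i j
  unfold topT stack
  by_cases hi : (1:ℤ) ≤ i
  · rw [if_pos hi, if_neg (by omega : ¬(i + (n1:ℤ) ≤ n1)),
      show i + (n1:ℤ) - n1 = i from by ring, show j - (n1:ℤ) + n1 = j from by ring]
  · rw [if_neg hi]
    by_contra h
    have := h2.1 i j (fun hc => h hc.symm)
    omega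

/-- Multiplicativity for Motzkin weights:
`w_l(M1 ∘ M2) = w_l(M1) · w_{l+2|M1|}(M2)`. -/
theorem stmt14 (l : ℕ) (hl : 1 ≤ l) (M1 M2 : List ℤ)
    (h1 : IsMotzkin M1) (h2 : IsMotzkin M2) :
    wM (M1.length + M2.length) l (M1 ++ M2)
      = wM M1.length l M1 * wM M2.length (l + 2 * M1.length) M2 := by
  set n1 := M1.length with hn1
  set n2 := M2.length with hn2
  unfold wM
  rw [← Nat.card_prod]
  apply Nat.card_congr
  exact
    { toFun := fun A =>
        (⟨botT n1 A.1, (forward_split hl rfl rfl h1.2.2 A.2.1 A.2.2).1,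
          (forward_split hl rfl rfl h1.2.2 A.2.1 A.2.2).2.2.1⟩,
         ⟨topT n1 A.1, (forward_split hl rfl rfl h1.2.2 A.2.1 A.2.2).2.1,
          (forward_split hl rfl rfl h1.2.2 A.2.1 A.2.2).2.2.2⟩)
      invFun := fun B =>
        ⟨stack n1 B.1.1 B.2.1, stack_isTrap B.1.2.1 B.2.2.1,
          backward_merge hl rfl rfl B.1.2.1 B.2.2.1 B.1.2.2 B.2.2.2⟩
      left_inv := fun A => Subtype.ext (stack_bot_top n1 A.1)
      right_inv := fun B =>
        Prod.ext (Subtype.ext (bot_stack (n2 := n2) B.1.2.1)) (Subtype.ext (top_stack (n1 := n1) B.2.2.1)) }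
end

section
/- Concatenation of centred Catalan sets adds areas: for centred Catalan sets S1, S2, area(M(S1 ∘ S2)) = area(M(S1)) + area(M(S2)), where area(M) is the area between the Motzkin path M and the x-axis. -/
open Finset

/-!
`M(S₁ ∘ S₂)` is `M(S₁)` followed by `M(S₂)`: the levels `1, …, |S₁| - 1` of `S₁ ∘ S₂` are those
of `S₁`, since `s_{|S₁|-1}` moves every nonzero element of `S₂` beyond them, and level
`|S₁| - 1 + j` is the image of level `j` of `S₂`. As `M(S₁)` returns to the x-axis, the heights
along the second part are those of `M(S₂)`, so the areas add.
-/

-- In `motz` the list `List.range (n - 1)` is silently coerced to a list of integers.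
theorem motz_eq_map (n : ℕ) (S : Finset ℤ) :
    motz n S = (List.range (n - 1)).map
      fun k : ℕ => (#(S ∩ {-((k : ℤ) + 1), (k : ℤ) + 1}) : ℤ) - 1 := by
  simp only [motz, List.pure_def, List.bind_eq_flatMap, ← List.map_eq_flatMap, List.map_map]
  rfl

namespace IsCCS

variable {n : ℕ} {S : Finset ℤ}

/- The condition at `i = 0` applies even when `n = 0` (as `0 ≤ 0 - 1` in `ℕ`), so there are no
centred Catalan sets of size `0`. -/
theorem zero_mem (h : IsCCS n S) : (0 : ℤ) ∈ S := by
  have h0 := h.2.2 0 (Nat.zero_le _)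
  simp only [Nat.cast_zero, neg_zero, zero_add] at h0
  obtain ⟨x, hx⟩ : (S ∩ Icc 0 0).Nonempty := by
    rw [← card_pos]
    omega
  simp only [Icc_self, mem_inter, mem_singleton] at hx
  exact hx.2 ▸ hx.1

theorem one_le (h : IsCCS n S) : 1 ≤ n :=
  h.1 ▸ card_pos.mpr ⟨0, h.zero_mem⟩

theorem sum_motz (h : IsCCS n S) : (motz n S).sum = 0 := by
  obtain ⟨hcard, hbound, -⟩ := id h
  have hdisj : ((range (n - 1) : Finset ℕ) : Set ℕ).PairwiseDisjoint
      fun k : ℕ => S ∩ {-((k : ℤ) + 1), (k : ℤ) + 1} := by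
    intro k _ k' _ hkk'
    simp only [Function.onFun, disjoint_left, mem_inter, mem_insert, mem_singleton]
    omega
  have hunion : (range (n - 1)).biUnion (fun k : ℕ => S ∩ {-((k : ℤ) + 1), (k : ℤ) + 1})
      = S.erase 0 := by
    ext x
    simp only [mem_biUnion, mem_range, mem_erase, mem_inter, mem_insert, mem_singleton]
    constructor
    · rintro ⟨k, -, hxS, hx⟩
      exact ⟨by omega, hxS⟩
    · rintro ⟨hx0, hxS⟩
      have := hbound x hxS
      exact ⟨x.natAbs - 1, by omega, hxS, by omega⟩
  have hsum : ∑ k ∈ range (n - 1), #(S ∩ {-((k : ℤ) + 1), (k : ℤ) + 1}) = n - 1 := by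
    rw [← card_biUnion hdisj, hunion, card_erase_of_mem h.zero_mem, hcard]
  have hlist : (motz n S).sum
      = ∑ k ∈ range (n - 1), ((#(S ∩ {-((k : ℤ) + 1), (k : ℤ) + 1}) : ℤ) - 1) := by
    rw [motz_eq_map]
    rfl
  rw [hlist, sum_sub_distrib, ← Nat.cast_sum, hsum, sum_const, card_range, nsmul_one, sub_self]

end IsCCS

theorem marea_append {L₁ : List ℤ} (L₂ : List ℤ) (h : L₁.sum = 0) :
    marea (L₁ ++ L₂) = marea L₁ + marea L₂ := by
  simp only [marea, List.length_append, sum_range_add]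
  congr 1 <;> refine sum_congr rfl fun j hj => ?_
  · rw [List.take_append_of_le_length (mem_range.mp hj).le]
  · rw [List.take_length_add_append, List.sum_append, h, zero_add]

theorem dil_injective {l : ℤ} (hl : 0 ≤ l) : Function.Injective (dil l) := by
  intro x y hxy
  unfold dil at hxy
  split_ifs at hxy <;> omega

theorem dil_mem_pair_iff {l i : ℤ} (hl : 0 ≤ l) (hi : 0 < i) (y : ℤ) :
    dil l y ∈ ({-(i + l), i + l} : Finset ℤ) ↔ y ∈ ({-i, i} : Finset ℤ) := by
  simp only [dil, mem_insert, mem_singleton]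
  split_ifs <;> omega

theorem dil_notMem_pair {l i : ℤ} (hi : 0 < i) (hil : i ≤ l) (y : ℤ) :
    dil l y ∉ ({-i, i} : Finset ℤ) := by
  simp only [dil, mem_insert, mem_singleton]
  split_ifs <;> omega

section ccsConcat

variable {S₁ S₂ : Finset ℤ} {i : ℤ}

theorem ccsConcat_inter_pair_of_le (hi : 0 < i) (hil : i ≤ #S₁ - 1) :
    ccsConcat S₁ S₂ ∩ {-i, i} = S₁ ∩ {-i, i} := by
  ext x
  simp only [ccsConcat, mem_inter, mem_union, mem_image]
  constructor
  · rintro ⟨hx | ⟨y, -, rfl⟩, hpair⟩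
    · exact ⟨hx, hpair⟩
    · exact absurd hpair (dil_notMem_pair hi hil y)
  · exact fun ⟨hx, hpair⟩ => ⟨Or.inl hx, hpair⟩

theorem ccsConcat_inter_pair_add (hne : S₁.Nonempty)
    (hS₁ : ∀ x ∈ S₁, -(#S₁ : ℤ) < x ∧ x < #S₁) (hi : 0 < i) :
    ccsConcat S₁ S₂ ∩ {-(i + (#S₁ - 1)), i + (#S₁ - 1)}
      = (S₂ ∩ {-i, i}).image (dil (#S₁ - 1)) := by
  have hl : (0 : ℤ) ≤ #S₁ - 1 := by have := hne.card_pos; omega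
  ext x
  simp only [ccsConcat, mem_inter, mem_union, mem_image]
  constructor
  · rintro ⟨hx | ⟨y, hy, rfl⟩, hpair⟩
    · have := hS₁ x hx
      simp only [mem_insert, mem_singleton] at hpair
      omega
    · exact ⟨y, ⟨hy, (dil_mem_pair_iff hl hi y).mp hpair⟩, rfl⟩
  · rintro ⟨y, ⟨hy, hpair⟩, rfl⟩
    exact ⟨Or.inr ⟨y, hy, rfl⟩, (dil_mem_pair_iff hl hi y).mpr hpair⟩

end ccsConcat

theorem motz_ccsConcat {m n : ℕ} {S₁ S₂ : Finset ℤ} (h₁ : IsCCS m S₁) (hn : 1 ≤ n) :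
    motz (m + n - 1) (ccsConcat S₁ S₂) = motz m S₁ ++ motz n S₂ := by
  have hm := h₁.one_le
  obtain ⟨hcard, hbound, -⟩ := h₁
  rw [motz_eq_map, motz_eq_map, motz_eq_map, show m + n - 1 - 1 = (m - 1) + (n - 1) by omega,
    List.range_add, List.map_append, List.map_map]
  congr 1
  · refine List.map_congr_left fun k hk => ?_
    have := List.mem_range.mp hk
    rw [ccsConcat_inter_pair_of_le (by positivity) (by omega)]
  · refine List.map_congr_left fun k _ => ?_
    have hS₁ : ∀ x ∈ S₁, -(#S₁ : ℤ) < x ∧ x < #S₁ := fun x hx => by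
      have := hbound x hx
      omega
    have := ccsConcat_inter_pair_add (S₂ := S₂) (card_pos.mp (by omega)) hS₁
      (show (0 : ℤ) < k + 1 by positivity)
    rw [Function.comp_apply, show (((m - 1 + k : ℕ) : ℤ) + 1) = (k + 1) + (#S₁ - 1) by omega,
      this, card_image_of_injective _ (dil_injective (by omega))]

theorem stmt16_general (m n : ℕ) (S1 S2 : Finset ℤ)
    (h1 : IsCCS m S1) (h2 : IsCCS n S2) :
    marea (motz (m + n - 1) (ccsConcat S1 S2))
      = marea (motz m S1) + marea (motz n S2) := by
  rw [motz_ccsConcat h1 h2.one_le, marea_append _ h1.sum_motz]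

/-- Concatenation of centred Catalan sets adds areas:
`area(M(S1 ∘ S2)) = area(M(S1)) + area(M(S2))`. -/
theorem stmt16 (m n : ℕ) (hm : 1 ≤ m) (hn : 1 ≤ n) (S1 S2 : Finset ℤ)
    (h1 : IsCCS m S1) (h2 : IsCCS n S2) :
    marea (motz (m + n - 1) (ccsConcat S1 S2))
      = marea (motz m S1) + marea (motz n S2) :=
  stmt16_general m n S1 S2 h1 h2
end
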